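/- For every w ∈ ℝ^n there exists a unique x(w) ∈ 𝒲 such that ⟨A x(w), v⟩ = ⟨Bᵀw, v⟩ for all v ∈ 𝒲, and the map S : ℝ^n → ℝ^n defined by S w = B x(w) + C w is linear, symmetric (⟨S w, w'⟩ = ⟨w, S w'⟩ for all w, w' ∈ ℝ^n) and positive definite. -/

import Mathlib

/-!
The defining relation of `x(w)` is the Galerkin equation on `𝒲` for the form `⟨A ·, ·⟩`, which is
positive definite on `𝒲`; the difference `d` of two solutions satisfies `⟨A d, d⟩ = 0`, so
solutions are unique, and uniqueness makes `w ↦ x(w)` linear. Testing the equation for `x(w')`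
with `x(w)` gives `⟨B x(w), w'⟩ = ⟨A x(w'), x(w)⟩`, so the part `w ↦ B x(w)` of `S` is symmetric
(as `A` is) and positive semidefinite; adding the positive definite `C` gives the claim.
-/

open scoped RealInnerProductSpace

namespace Galerkin

variable {E F : Type*} [NormedAddCommGroup E] [InnerProductSpace ℝ E]

def IsSolution (A : E →L[ℝ] E) (W : Submodule ℝ E) (f y : E) : Prop :=
  y ∈ W ∧ ∀ v ∈ W, ⟪A y, v⟫ = ⟪f, v⟫

variable {A : E →L[ℝ] E} {W : Submodule ℝ E} {f g y z : E}

theorem IsSolution.unique (hA : ∀ y ∈ W, y ≠ 0 → 0 < ⟪A y, y⟫)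
    (hy : IsSolution A W f y) (hz : IsSolution A W f z) : y = z := by
  have hdiff : y - z ∈ W := W.sub_mem hy.1 hz.1
  have hzero : ⟪A (y - z), y - z⟫ = 0 := by
    rw [map_sub, inner_sub_left, hy.2 _ hdiff, hz.2 _ hdiff, sub_self]
  by_contra hne
  exact (hA _ hdiff (sub_ne_zero.mpr hne)).ne' hzero

theorem IsSolution.add (hy : IsSolution A W f y) (hz : IsSolution A W g z) :
    IsSolution A W (f + g) (y + z) :=
  ⟨W.add_mem hy.1 hz.1, fun v hv => by
    rw [map_add, inner_add_left, inner_add_left, hy.2 v hv, hz.2 v hv]⟩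

theorem IsSolution.smul (a : ℝ) (hy : IsSolution A W f y) :
    IsSolution A W (a • f) (a • y) :=
  ⟨W.smul_mem a hy.1, fun v hv => by
    rw [map_smul, inner_smul_left, inner_smul_left, hy.2 v hv]⟩

section SchurComplement

variable [CompleteSpace E] [NormedAddCommGroup F] [InnerProductSpace ℝ F] [CompleteSpace F]
  {B : E →L[ℝ] F} {x : F → E}

theorem inner_map_solution (hx : ∀ w, IsSolution A W (B.adjoint w) (x w)) (w w' : F) :
    ⟪B (x w), w'⟫ = ⟪A (x w'), x w⟫ := by
  rw [real_inner_comm, ← ContinuousLinearMap.adjoint_inner_left, (hx w').2 _ (hx w).1]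

variable (hA : ∀ y ∈ W, y ≠ 0 → 0 < ⟪A y, y⟫) (hx : ∀ w, IsSolution A W (B.adjoint w) (x w))
include hA hx

theorem solution_add (w w' : F) : x (w + w') = x w + x w' :=
  (hx _).unique hA (by simpa only [map_add] using (hx w).add (hx w'))

theorem solution_smul (a : ℝ) (w : F) : x (a • w) = a • x w :=
  (hx _).unique hA (by simpa only [map_smul] using (hx w).smul a)

omit hA in
theorem inner_map_solution_comm (hAsym : ∀ y z, ⟪A y, z⟫ = ⟪y, A z⟫) (w w' : F) :
    ⟪B (x w), w'⟫ = ⟪w, B (x w')⟫ := by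
  rw [inner_map_solution hx, real_inner_comm (B (x w')), inner_map_solution hx, hAsym, real_inner_comm]

theorem inner_map_solution_nonneg (w : F) : 0 ≤ ⟪B (x w), w⟫ := by
  rw [inner_map_solution hx]
  by_cases hxw : x w = 0
  · simp [hxw]
  · exact (hA _ (hx w).1 hxw).le

end SchurComplement

end Galerkin

open Galerkin in
theorem stmt_9 {m n : ℕ}
    (A : EuclideanSpace ℝ (Fin m) →L[ℝ] EuclideanSpace ℝ (Fin m))
    (hAsym : ∀ x y : EuclideanSpace ℝ (Fin m), ⟪A x, y⟫ = ⟪x, A y⟫)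
    (hApos : ∀ x : EuclideanSpace ℝ (Fin m), x ≠ 0 → 0 < ⟪A x, x⟫)
    (B : EuclideanSpace ℝ (Fin m) →L[ℝ] EuclideanSpace ℝ (Fin n))
    (C : EuclideanSpace ℝ (Fin n) →L[ℝ] EuclideanSpace ℝ (Fin n))
    (hCsym : ∀ x y : EuclideanSpace ℝ (Fin n), ⟪C x, y⟫ = ⟪x, C y⟫)
    (hCpos : ∀ x : EuclideanSpace ℝ (Fin n), x ≠ 0 → 0 < ⟪C x, x⟫)
    (𝒲 : Submodule ℝ (EuclideanSpace ℝ (Fin m)))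
    -- `x w` denotes the element of `𝒲` with `⟨A (x w), v⟩ = ⟨Bᵀ w, v⟩` for all `v ∈ 𝒲`
    (x : EuclideanSpace ℝ (Fin n) → EuclideanSpace ℝ (Fin m))
    (hx : ∀ w : EuclideanSpace ℝ (Fin n), x w ∈ 𝒲 ∧
      ∀ v ∈ 𝒲, ⟪A (x w), v⟫ = ⟪(ContinuousLinearMap.adjoint B) w, v⟫) :
    -- existence and uniqueness of `x(w)`
    (∀ w : EuclideanSpace ℝ (Fin n), ∃! xw : EuclideanSpace ℝ (Fin m),
      xw ∈ 𝒲 ∧ ∀ v ∈ 𝒲, ⟪A xw, v⟫ = ⟪(ContinuousLinearMap.adjoint B) w, v⟫) ∧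
    -- `S w = B (x w) + C w` is additive
    (∀ w w' : EuclideanSpace ℝ (Fin n),
      B (x (w + w')) + C (w + w') = (B (x w) + C w) + (B (x w') + C w')) ∧
    -- `S` is homogeneous
    (∀ (a : ℝ) (w : EuclideanSpace ℝ (Fin n)),
      B (x (a • w)) + C (a • w) = a • (B (x w) + C w)) ∧
    -- `S` is symmetric
    (∀ w w' : EuclideanSpace ℝ (Fin n),
      ⟪B (x w) + C w, w'⟫ = ⟪w, B (x w') + C w'⟫) ∧
    -- `S` is positive definite
    (∀ w : EuclideanSpace ℝ (Fin n), w ≠ 0 → 0 < ⟪B (x w) + C w, w⟫) := by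
  have hA𝒲 : ∀ y ∈ 𝒲, y ≠ 0 → 0 < ⟪A y, y⟫ := fun y _ => hApos y
  have hx' : ∀ w, IsSolution A 𝒲 (B.adjoint w) (x w) := hx
  refine ⟨fun w => ⟨x w, hx w, fun y hy => IsSolution.unique hA𝒲 hy (hx w)⟩, fun w w' => ?_,
    fun a w => ?_, fun w w' => ?_, fun w hw => ?_⟩
  · rw [solution_add hA𝒲 hx', map_add, map_add]
    abel
  · rw [solution_smul hA𝒲 hx', map_smul, map_smul, smul_add]
  · rw [inner_add_left, inner_add_right, inner_map_solution_comm hx' hAsym, hCsym]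
  · rw [inner_add_left]
    exact add_pos_of_nonneg_of_pos (inner_map_solution_nonneg hA𝒲 hx' w) (hCpos w hw)
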